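/- arXiv:1702.04834 — 5 statements merged into one kernel-verified Lean document; each statement's English description precedes it below -/
import Mathlib

section
/- Finite-blocklength worst-case converse (Theorem 1): Consider any zero-error coded caching scheme with common delivery alphabet, i.e., positive integers N, K, F, a real M ≥ 0, messages W_1,…,W_N i.i.d. uniform on {1,…,2^F}, cache values V_k = g_k(W_1,…,W_N) for k ∈ {1,…,K} where each g_k maps into a set of size at most ⌊2^{F·M}⌋, a single finite delivery alphabet 𝒳, for every demand vector d ∈ {1,…,N}^K a delivery symbol X_d = f_d(W_1,…,W_N) ∈ 𝒳, and decoders φ_{k,d} with φ_{k,d}(X_d, V_k) = W_{d_k} for every realization of (W_1,…,W_N), every k ∈ {1,…,K}, and every d ∈ {1,…,N}^K. Then for every ℓ ∈ {1,…,min(K,N)}: log₂|𝒳| ≥ F·(ℓ − M·ℓ²/N) and log₂|𝒳| ≥ F·(ℓ − M·∑_{k=1}^{ℓ} k/(N−k+1)). (Letting F → ∞ this yields the paper's asymptotic bound R*_worst(M) ≥ R^low_worst(M).) -/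
/-!
Every quantity of a zero-error scheme is a function of the uniformly distributed messages, so
entropies of partitions of the message space suffice. Pick distinct messages `s 0, s 1, …`
greedily: as the messages are independent, what caches `Z` reveal about the single unknown
messages adds up to at most the entropy of `Z` given the known ones, so at step `m` some message
leaks at most a `1 / (N - m)` share of it. Let user `m` demand `s m`; since user `m` decodes `s m`
from the delivery symbol and its cache, the chain rule along this order shows that the symbol
carries `ℓ F` bits minus the total leak. With the caches of users `0, …, m` at step `m` each leak
is at most `(m + 1) F M / (N - m)`: the harmonic bound. With the caches of the first `ℓ` users
throughout, their remaining entropy `a m` obeys `(N - m) (a m - a (m + 1)) ≤ a m`, so only an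
`ℓ / N` share of `a 0 ≤ ℓ F M` leaks: the quadratic bound.
-/

open Finset Real

theorem sum_logb_nonpos_of_sum_le_card {Ω : Type*} [Fintype Ω] {r : Ω → ℝ} (hr : ∀ ω, 0 < r ω)
    (hsum : ∑ ω, r ω ≤ Fintype.card Ω) :
    ∑ ω, logb 2 (r ω) ≤ 0 := by
  have hlog : ∑ ω, log (r ω) ≤ 0 := calc
    ∑ ω, log (r ω) ≤ ∑ ω, (r ω - 1) := sum_le_sum fun ω _ => log_le_sub_one_of_pos (hr ω)
    _ ≤ 0 := by simpa [sum_sub_distrib] using hsum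
  simp only [logb, ← sum_div]
  exact div_nonpos_of_nonpos_of_nonneg hlog (log_nonneg one_le_two)

namespace Setoid

theorem iInf_iff {Ω : Type*} {ι : Sort*} (r : ι → Setoid Ω) {x y : Ω} :
    (⨅ i, r i) x y ↔ ∀ i, r i x y := by
  rw [iInf, sInf_iff]; simp

variable {Ω : Type*} [Fintype Ω] (s t u : Setoid Ω)

open Classical in
noncomputable def classCard (ω : Ω) : ℕ := #{ω' | s ω ω'}

/-- Shannon entropy, in bits, of the class of a uniformly random point: a partition stands for the
information carried by any function whose fibres are its classes, and the class of `ω` has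
probability `classCard s ω / |Ω|`. -/
noncomputable def entropy : ℝ :=
  (Fintype.card Ω : ℝ)⁻¹ * ∑ ω, logb 2 (Fintype.card Ω / s.classCard ω)

noncomputable def condEntropy : ℝ := (s ⊓ t).entropy - t.entropy

noncomputable def condMutualInfo : ℝ := s.condEntropy u - s.condEntropy (t ⊓ u)

variable {s t u}

theorem classCard_pos (ω : Ω) : (0 : ℝ) < s.classCard ω := by
  classical
  exact_mod_cast card_pos.2 ⟨ω, by simp⟩

theorem classCard_mono (h : s ≤ t) (ω : Ω) : s.classCard ω ≤ t.classCard ω := by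
  classical
  exact card_le_card fun ω' hω' => by
    simp only [mem_filter, mem_univ, true_and] at hω' ⊢
    exact h hω'

theorem classCard_eq_of_rel {ω ω' : Ω} (h : s ω ω') : s.classCard ω = s.classCard ω' := by
  classical
  unfold classCard
  congr 1
  exact filter_congr fun x _ => ⟨s.trans' (s.symm' h), s.trans' h⟩

theorem classCard_top (ω : Ω) : (⊤ : Setoid Ω).classCard ω = Fintype.card Ω := by
  classical
  simp [classCard, top_def]

theorem sum_inv_classCard_le_one {E : Finset Ω} (hE : ∀ x ∈ E, ∀ y ∈ E, s x y) :
    ∑ ω ∈ E, (s.classCard ω : ℝ)⁻¹ ≤ 1 := by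
  classical
  rcases E.eq_empty_or_nonempty with rfl | ⟨ω₀, h₀⟩
  · simp
  have hcard : #E ≤ s.classCard ω₀ :=
    card_le_card fun ω hω => by simpa [classCard] using hE ω₀ h₀ ω hω
  rw [sum_congr rfl fun ω hω => by rw [classCard_eq_of_rel (hE ω hω ω₀ h₀)], sum_const,
    nsmul_eq_mul, ← div_eq_mul_inv, div_le_one (classCard_pos ω₀)]
  exact_mod_cast hcard

theorem entropy_anti (h : s ≤ t) : t.entropy ≤ s.entropy := by
  unfold entropy
  gcongr with ω
  · norm_num
  · have := Fintype.card_pos_iff.2 ⟨ω⟩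
    have := classCard_pos (s := t) ω
    positivity
  · exact classCard_pos ω
  · exact_mod_cast classCard_mono h ω

theorem entropy_top : (⊤ : Setoid Ω).entropy = 0 := by
  refine mul_eq_zero_of_right _ (sum_eq_zero fun ω _ => ?_)
  rw [classCard_top, div_self (by exact_mod_cast (Fintype.card_pos_iff.2 ⟨ω⟩).ne'), logb_one]

theorem entropy_ker_le_logb_card [Nonempty Ω] {α : Type*} [Fintype α] (f : Ω → α) :
    (ker f).entropy ≤ logb 2 (Fintype.card α) := by
  classical
  have hΩ : (0 : ℝ) < Fintype.card Ω := by exact_mod_cast Fintype.card_pos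
  have : Nonempty α := ⟨f (Classical.arbitrary Ω)⟩
  have hα : (0 : ℝ) < Fintype.card α := by exact_mod_cast Fintype.card_pos
  have hinv : ∑ ω, ((ker f).classCard ω : ℝ)⁻¹ ≤ Fintype.card α := by
    rw [← sum_fiberwise univ f]
    calc ∑ a, ∑ ω with f ω = a, ((ker f).classCard ω : ℝ)⁻¹ ≤ ∑ _a : α, (1 : ℝ) :=
          sum_le_sum fun a _ => sum_inv_classCard_le_one fun x hx y hy => by
            simp only [mem_filter] at hx hy; exact hx.2.trans hy.2.symm
      _ = Fintype.card α := by simp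
  have hgibbs : ∑ ω, logb 2 (Fintype.card Ω / ((ker f).classCard ω * Fintype.card α)) ≤ 0 := by
    refine sum_logb_nonpos_of_sum_le_card
      (fun ω => by have := classCard_pos (s := ker f) ω; positivity) ?_
    calc ∑ ω, (Fintype.card Ω : ℝ) / ((ker f).classCard ω * Fintype.card α)
        = Fintype.card Ω / Fintype.card α * ∑ ω, ((ker f).classCard ω : ℝ)⁻¹ := by
          rw [mul_sum]; congr! 1 with ω; field_simp
      _ ≤ Fintype.card Ω / Fintype.card α * Fintype.card α := by gcongr
      _ = Fintype.card Ω := by field_simp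
  have hterm (ω : Ω) : logb 2 (Fintype.card Ω / (ker f).classCard ω) - logb 2 (Fintype.card α)
      = logb 2 (Fintype.card Ω / ((ker f).classCard ω * Fintype.card α)) := by
    have hn := classCard_pos (s := ker f) ω
    rw [logb_div hΩ.ne' hn.ne', logb_div hΩ.ne' (by positivity), logb_mul hn.ne' hα.ne']
    ring
  have hdiff : (ker f).entropy - logb 2 (Fintype.card α) = (Fintype.card Ω : ℝ)⁻¹
      * ∑ ω, logb 2 (Fintype.card Ω / ((ker f).classCard ω * Fintype.card α)) := by
    rw [← sum_congr rfl fun ω _ => hterm ω, sum_sub_distrib, sum_const, card_univ, nsmul_eq_mul,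
      entropy, mul_sub, inv_mul_cancel_left₀ hΩ.ne']
  rw [← sub_nonpos, hdiff]
  exact mul_nonpos_of_nonneg_of_nonpos (by positivity) hgibbs

open Classical in
theorem classCard_eq_sum (ω : Ω) : (s.classCard ω : ℝ) = ∑ ω', if s ω ω' then 1 else 0 := by
  simp [classCard, sum_boole]

open Classical in
/-- The `ω` counted on the left form one class of `s ⊓ u` inside the `t`-class of `ω₁`, and there
are none unless `t ω₁ ω₂`. -/
theorem sum_inv_classCard_inf_le (h : u ≤ t) (ω₁ ω₂ : Ω) :
    ∑ ω, (if (s ⊓ t) ω ω₁ ∧ u ω ω₂ then ((t.classCard ω : ℝ) * (s ⊓ u).classCard ω)⁻¹ else 0)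
      ≤ if t ω₁ ω₂ then (t.classCard ω₁ : ℝ)⁻¹ else 0 := by
  rw [← sum_filter]
  split_ifs with ht
  · calc ∑ ω with (s ⊓ t) ω ω₁ ∧ u ω ω₂, ((t.classCard ω : ℝ) * (s ⊓ u).classCard ω)⁻¹
        = (t.classCard ω₁ : ℝ)⁻¹
            * ∑ ω with (s ⊓ t) ω ω₁ ∧ u ω ω₂, ((s ⊓ u).classCard ω : ℝ)⁻¹ := by
          rw [mul_sum]
          refine sum_congr rfl fun ω hω => ?_
          simp only [mem_filter] at hω
          rw [classCard_eq_of_rel hω.2.1.2, mul_inv]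
      _ ≤ (t.classCard ω₁ : ℝ)⁻¹ * 1 := by
          gcongr
          refine sum_inv_classCard_le_one fun x hx y hy => ?_
          simp only [mem_filter] at hx hy ⊢
          exact ⟨s.trans' hx.2.1.1 (s.symm' hy.2.1.1), u.trans' hx.2.2 (u.symm' hy.2.2)⟩
      _ = _ := mul_one _
  · refine (sum_eq_zero fun ω hω => ?_).le
    simp only [mem_filter] at hω
    exact absurd (t.trans' (t.symm' hω.2.1.2) (h hω.2.2)) ht

open Classical in
theorem sum_classCard_mul_div_le (h : u ≤ t) :
    ∑ ω, ((s ⊓ t).classCard ω * u.classCard ω : ℝ) / (t.classCard ω * (s ⊓ u).classCard ω)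
      ≤ Fintype.card Ω := by
  calc ∑ ω, ((s ⊓ t).classCard ω * u.classCard ω : ℝ) / (t.classCard ω * (s ⊓ u).classCard ω)
      = ∑ ω₁, ∑ ω₂, ∑ ω, (if (s ⊓ t) ω ω₁ ∧ u ω ω₂
          then ((t.classCard ω : ℝ) * (s ⊓ u).classCard ω)⁻¹ else 0) := by
        simp_rw [div_eq_mul_inv, classCard_eq_sum (s := s ⊓ t), classCard_eq_sum (s := u),
          sum_mul_sum, sum_mul, ite_zero_mul_ite_zero, ite_mul, one_mul, zero_mul]
        rw [sum_comm]
        exact sum_congr rfl fun _ _ => sum_comm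
    _ ≤ ∑ ω₁, ∑ ω₂, if t ω₁ ω₂ then (t.classCard ω₁ : ℝ)⁻¹ else 0 :=
        sum_le_sum fun ω₁ _ => sum_le_sum fun ω₂ _ => sum_inv_classCard_inf_le h ω₁ ω₂
    _ = ∑ _ω₁ : Ω, (1 : ℝ) := by
        refine sum_congr rfl fun ω₁ _ => ?_
        rw [← sum_filter, sum_const, nsmul_eq_mul]
        exact mul_inv_cancel₀ (classCard_pos ω₁).ne'
    _ = Fintype.card Ω := by simp

theorem condEntropy_anti (h : u ≤ t) : s.condEntropy u ≤ s.condEntropy t := by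
  have hgibbs := sum_logb_nonpos_of_sum_le_card (fun ω => by
      have := classCard_pos (s := s ⊓ t) ω; have := classCard_pos (s := u) ω
      have := classCard_pos (s := t) ω; have := classCard_pos (s := s ⊓ u) ω
      positivity) (sum_classCard_mul_div_le (s := s) h)
  have hterm (ω : Ω) :
      logb 2 (Fintype.card Ω / (s ⊓ u).classCard ω) - logb 2 (Fintype.card Ω / u.classCard ω)
        - (logb 2 (Fintype.card Ω / (s ⊓ t).classCard ω) - logb 2 (Fintype.card Ω / t.classCard ω))
      = logb 2 (((s ⊓ t).classCard ω * u.classCard ω : ℝ)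
          / (t.classCard ω * (s ⊓ u).classCard ω)) := by
    have hΩ : (Fintype.card Ω : ℝ) ≠ 0 := by exact_mod_cast (Fintype.card_pos_iff.2 ⟨ω⟩).ne'
    have h₁ := (classCard_pos (s := s ⊓ t) ω).ne'
    have h₂ := (classCard_pos (s := u) ω).ne'
    have h₃ := (classCard_pos (s := t) ω).ne'
    have h₄ := (classCard_pos (s := s ⊓ u) ω).ne'
    rw [logb_div hΩ h₁, logb_div hΩ h₂, logb_div hΩ h₃, logb_div hΩ h₄,
      logb_div (mul_ne_zero h₁ h₂) (mul_ne_zero h₃ h₄), logb_mul h₁ h₂, logb_mul h₃ h₄]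
    ring
  have hdiff : s.condEntropy u - s.condEntropy t = (Fintype.card Ω : ℝ)⁻¹ * ∑ ω,
      logb 2 (((s ⊓ t).classCard ω * u.classCard ω : ℝ)
        / (t.classCard ω * (s ⊓ u).classCard ω)) := by
    simp only [← sum_congr rfl fun ω _ => hterm ω, sum_sub_distrib, condEntropy, entropy]
    ring
  rw [← sub_nonpos, hdiff]
  exact mul_nonpos_of_nonneg_of_nonpos (by positivity) hgibbs

theorem condEntropy_nonneg : 0 ≤ s.condEntropy t := sub_nonneg.2 (entropy_anti inf_le_right)

theorem condEntropy_bot : s.condEntropy ⊥ = 0 := by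
  rw [condEntropy, inf_bot_eq, sub_self]

theorem condEntropy_le_entropy : s.condEntropy t ≤ s.entropy := by
  simpa [condEntropy, entropy_top] using condEntropy_anti (s := s) (le_top : t ≤ ⊤)

theorem entropy_inf_le_add : (s ⊓ t).entropy ≤ s.entropy + t.entropy := by
  have := condEntropy_le_entropy (s := s) (t := t)
  rw [condEntropy] at this
  linarith

theorem condEntropy_eq_add_of_inf_le (h : s ⊓ u ≤ t) :
    s.condEntropy u = t.condEntropy u + s.condEntropy (t ⊓ u) := by
  rw [condEntropy, condEntropy, condEntropy, inf_left_comm, inf_eq_right.2 h]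
  ring

theorem condMutualInfo_comm : s.condMutualInfo t u = t.condMutualInfo s u := by
  simp only [condMutualInfo, condEntropy, inf_left_comm s t u]
  ring

section JointKer

variable {Ω κ : Type*} {β : κ → Type*}

def jointKer (o : ∀ k, Ω → β k) (U : Finset κ) : Setoid Ω := ⨅ k ∈ U, ker (o k)

theorem jointKer_iff {o : ∀ k, Ω → β k} {U : Finset κ} {x y : Ω} :
    jointKer o U x y ↔ ∀ k ∈ U, o k x = o k y := by
  unfold jointKer
  simp only [Setoid.iInf_iff, ker_def]

theorem jointKer_anti (o : ∀ k, Ω → β k) : Antitone (jointKer o) :=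
  fun _ _ h => biInf_mono fun _ hk => h hk

theorem jointKer_insert [DecidableEq κ] (o : ∀ k, Ω → β k) (k : κ) (U : Finset κ) :
    jointKer o (insert k U) = ker (o k) ⊓ jointKer o U :=
  iInf_insert k U _

theorem jointKer_singleton (o : ∀ k, Ω → β k) (k : κ) : jointKer o {k} = ker (o k) :=
  iInf_singleton k _

theorem entropy_jointKer_le [Fintype Ω] [Nonempty Ω] [∀ k, Fintype (β k)] (o : ∀ k, Ω → β k)
    (U : Finset κ) : (jointKer o U).entropy ≤ ∑ k ∈ U, logb 2 (Fintype.card (β k)) := by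
  classical
  induction U using Finset.induction_on with
  | empty => simp [jointKer, entropy_top]
  | insert k U hk ih =>
    rw [jointKer_insert, sum_insert hk]
    exact entropy_inf_le_add.trans (add_le_add (entropy_ker_le_logb_card _) ih)

end JointKer

end Setoid

open Setoid

theorem card_image_range_of_notMem {ι : Type*} [DecidableEq ι] {s : ℕ → ι} {n : ℕ}
    (hs : ∀ m < n, s m ∉ (range m).image s) : #((range n).image s) = n := by
  induction n with
  | zero => simp
  | succ n ih =>
    rw [range_add_one, image_insert, card_insert_of_notMem (hs n n.lt_add_one),
      ih fun m hm => hs m (by omega)]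

section Messages

variable {ι α : Type*}

def messages (T : Finset ι) : Setoid (ι → α) := jointKer (fun i w => w i) T

theorem messages_iff {T : Finset ι} {w w' : ι → α} : messages T w w' ↔ ∀ i ∈ T, w i = w' i :=
  jointKer_iff

theorem messages_insert [DecidableEq ι] (i : ι) (T : Finset ι) :
    messages (insert i T) = messages {i} ⊓ (messages T : Setoid (ι → α)) := by
  simp only [messages, jointKer_insert, jointKer_singleton]

theorem messages_anti : Antitone (messages : Finset ι → Setoid (ι → α)) :=
  jointKer_anti _

theorem condMutualInfo_messages_eq [Fintype ι] [DecidableEq ι] [Fintype α] (Z : Setoid (ι → α))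
    (i : ι) (A : Finset ι) :
    (messages {i}).condMutualInfo Z (messages A)
      = Z.condEntropy (messages A) - Z.condEntropy (messages (insert i A)) := by
  rw [condMutualInfo_comm, condMutualInfo, messages_insert]

theorem messages_univ [Fintype ι] : (messages univ : Setoid (ι → α)) = ⊥ :=
  le_bot_iff.1 fun _ _ h => funext fun i => messages_iff.1 h i (mem_univ i)

theorem classCard_messages [Fintype ι] [DecidableEq ι] [Fintype α] (T : Finset ι) (w : ι → α) :
    (messages T).classCard w = Fintype.card α ^ #Tᶜ := by
  classical
  have : ({w' | messages T w w'} : Finset (ι → α))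
      = Fintype.piFinset fun i => if i ∈ T then {w i} else univ := by
    ext w'
    simp only [mem_filter, mem_univ, true_and, messages_iff, Fintype.mem_piFinset]
    refine forall_congr' fun i => ?_
    split_ifs with hi <;> simp [hi, eq_comm]
  rw [classCard, this, Fintype.card_piFinset]
  simp only [apply_ite card, card_singleton, card_univ, prod_ite, prod_const_one, one_mul,
    prod_const]
  congr 2
  ext
  simp

theorem entropy_messages [Fintype ι] [DecidableEq ι] [Fintype α] [Nonempty α] (T : Finset ι) :
    (messages T : Setoid (ι → α)).entropy = #T * logb 2 (Fintype.card α) := by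
  have hα : (0 : ℝ) < Fintype.card α := by exact_mod_cast Fintype.card_pos
  have hΩ : Fintype.card (ι → α) = Fintype.card α ^ #T * Fintype.card α ^ #Tᶜ := by
    rw [Fintype.card_fun, ← pow_add, card_add_card_compl]
  simp only [entropy, classCard_messages, sum_const, card_univ, nsmul_eq_mul]
  rw [hΩ]
  push_cast
  rw [mul_div_cancel_right₀ _ (by positivity), logb_pow, inv_mul_cancel_left₀ (by positivity)]

variable [Fintype ι] [DecidableEq ι] [Fintype α] [Nonempty α]

theorem condEntropy_messages_singleton {i : ι} {A : Finset ι} (hi : i ∉ A) :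
    (messages {i}).condEntropy (messages A : Setoid (ι → α)) = logb 2 (Fintype.card α) := by
  rw [condEntropy, ← messages_insert, entropy_messages, entropy_messages,
    card_insert_of_notMem hi]
  push_cast
  ring

/-- As the messages are independent, conditioning on more of them can only increase what `Z`
reveals about a further one. -/
theorem condMutualInfo_messages_mono (Z : Setoid (ι → α)) {i : ι} {A B : Finset ι} (hAB : A ⊆ B)
    (hi : i ∉ B) :
    (messages {i}).condMutualInfo Z (messages A)
      ≤ (messages {i}).condMutualInfo Z (messages B) := by
  simp only [condMutualInfo, condEntropy_messages_singleton hi,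
    condEntropy_messages_singleton fun h => hi (hAB h)]
  gcongr 1
  exact condEntropy_anti (inf_le_inf_left _ (messages_anti hAB))

theorem sum_condMutualInfo_messages_le (Z : Setoid (ι → α)) {A R : Finset ι}
    (hRA : Disjoint R A) :
    ∑ i ∈ R, (messages {i}).condMutualInfo Z (messages A)
      ≤ Z.condEntropy (messages A) - Z.condEntropy (messages (A ∪ R)) := by
  induction R using Finset.induction_on with
  | empty => simp
  | insert i R hiR ih =>
    rw [disjoint_insert_left] at hRA
    have hstep := condMutualInfo_messages_mono Z (subset_union_left (s₂ := R))
      (notMem_union.2 ⟨hRA.1, hiR⟩)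
    rw [condMutualInfo_messages_eq Z i (A ∪ R), ← union_insert] at hstep
    rw [sum_insert hiR]
    linarith [ih hRA.2]

theorem exists_condMutualInfo_messages_le (Z : Setoid (ι → α)) {A : Finset ι}
    (hA : #A < Fintype.card ι) :
    ∃ i ∉ A, (Fintype.card ι - #A : ℝ) * (messages {i}).condMutualInfo Z (messages A)
      ≤ Z.condEntropy (messages A) := by
  have hsum := sum_condMutualInfo_messages_le Z (disjoint_compl_left (a := A))
  rw [union_compl, messages_univ, condEntropy_bot, sub_zero] at hsum
  have hcompl : (#Aᶜ : ℝ) = Fintype.card ι - #A := by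
    rw [card_compl, Nat.cast_sub hA.le]
  obtain ⟨i, hi, hle⟩ := exists_le_of_sum_le (s := Aᶜ)
    (f := fun i => (Fintype.card ι - #A : ℝ) * (messages {i}).condMutualInfo Z (messages A))
    (g := fun _ => Z.condEntropy (messages A))
    (card_pos.1 (by rw [card_compl]; omega)) (by
      rw [← mul_sum, sum_const, nsmul_eq_mul, hcompl]
      exact mul_le_mul_of_nonneg_left hsum (by rw [← hcompl]; positivity))
  exact ⟨i, mem_compl.1 hi, hle⟩

theorem exists_greedy_messages [Nonempty ι] (Z : ℕ → Setoid (ι → α)) {ℓ : ℕ}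
    (hℓ : ℓ ≤ Fintype.card ι) :
    ∃ s : ℕ → ι, ∀ m < ℓ, s m ∉ (range m).image s ∧
      (Fintype.card ι - m : ℝ)
          * (messages {s m}).condMutualInfo (Z m) (messages ((range m).image s))
        ≤ (Z m).condEntropy (messages ((range m).image s)) := by
  induction ℓ with
  | zero => exact ⟨fun _ => Classical.arbitrary ι, by simp⟩
  | succ ℓ ih =>
    obtain ⟨s, hs⟩ := ih (by omega)
    have hcard := card_image_range_of_notMem fun m hm => (hs m hm).1
    obtain ⟨i, hi, hle⟩ :=
      exists_condMutualInfo_messages_le (Z ℓ) (A := (range ℓ).image s) (by omega)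
    have hprefix : ∀ m ≤ ℓ, (range m).image (Function.update s ℓ i) = (range m).image s :=
      fun m hm => image_congr fun j hj => Function.update_of_ne (by rw [coe_range, Set.mem_Iio] at hj; omega) _ _
    refine ⟨Function.update s ℓ i, fun m hm => ?_⟩
    rw [hprefix m (by omega)]
    rcases (by omega : m < ℓ ∨ m = ℓ) with hm | rfl
    · rw [Function.update_of_ne (by omega)]
      exact hs m hm
    · rw [hcard] at hle
      rw [Function.update_self]
      exact ⟨hi, hle⟩

theorem mul_logb_card_sub_sum_le_entropy (X : Setoid (ι → α)) {Z : ℕ → Setoid (ι → α)}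
    (hZ : Antitone Z) {s : ℕ → ι} {ℓ : ℕ} (hs : ∀ m < ℓ, s m ∉ (range m).image s)
    (hdec : ∀ m < ℓ, Z m ⊓ X ≤ messages {s m}) :
    ℓ * logb 2 (Fintype.card α)
        - ∑ m ∈ range ℓ, (messages {s m}).condMutualInfo (Z m) (messages ((range m).image s))
      ≤ X.entropy := by
  set D : ℕ → ℝ := fun m => X.condEntropy (Z m ⊓ messages ((range m).image s))
  have step : ∀ m < ℓ, logb 2 (Fintype.card α)
      - (messages {s m}).condMutualInfo (Z m) (messages ((range m).image s)) ≤ D m - D (m + 1) := by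
    intro m hm
    have hchain := condEntropy_eq_add_of_inf_le (s := X) (u := Z m ⊓ messages ((range m).image s))
      (le_trans (le_inf (inf_le_right.trans inf_le_left) inf_le_left) (hdec m hm))
    have hmono :
        D (m + 1) ≤ X.condEntropy (messages {s m} ⊓ (Z m ⊓ messages ((range m).image s))) := by
      refine condEntropy_anti ?_
      rw [range_add_one, image_insert, messages_insert]
      exact le_inf (inf_le_right.trans inf_le_left)
        (le_inf (inf_le_left.trans (hZ m.le_succ)) (inf_le_right.trans inf_le_right))
    rw [condMutualInfo, condEntropy_messages_singleton (hs m hm)]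
    linarith
  calc ℓ * logb 2 (Fintype.card α)
        - ∑ m ∈ range ℓ, (messages {s m}).condMutualInfo (Z m) (messages ((range m).image s))
      = ∑ m ∈ range ℓ, (logb 2 (Fintype.card α)
          - (messages {s m}).condMutualInfo (Z m) (messages ((range m).image s))) := by
        simp [sum_sub_distrib]
    _ ≤ ∑ m ∈ range ℓ, (D m - D (m + 1)) := sum_le_sum fun m hm => step m (mem_range.1 hm)
    _ = D 0 - D ℓ := sum_range_sub' _ _
    _ ≤ X.entropy := by
        linarith [condEntropy_nonneg (s := X) (t := Z ℓ ⊓ messages ((range ℓ).image s)),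
          condEntropy_le_entropy (s := X) (t := Z 0 ⊓ messages ((range 0).image s))]

end Messages

theorem logb_le_of_le_floor_rpow {n : ℕ} (hn : 0 < n) {x : ℝ} (h : n ≤ ⌊(2 : ℝ) ^ x⌋₊) :
    logb 2 n ≤ x := by
  rw [logb_le_iff_le_rpow one_lt_two (by exact_mod_cast hn)]
  exact (Nat.cast_le.2 h).trans (Nat.floor_le (by positivity))

theorem mul_sub_le_of_mul_sub_succ_le (a : ℕ → ℝ) {N ℓ : ℕ} (hℓ : ℓ ≤ N)
    (h : ∀ m < ℓ, (N - m : ℝ) * (a m - a (m + 1)) ≤ a m) : N * (a 0 - a ℓ) ≤ ℓ * a 0 := by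
  suffices key : ∀ n ≤ ℓ, (N - n : ℝ) * a 0 ≤ N * a n by linarith [key ℓ le_rfl]
  intro n hn
  induction n with
  | zero => simp
  | succ n ih =>
    have hnN : (n : ℝ) + 1 ≤ N := by exact_mod_cast (show n + 1 ≤ N by omega)
    have hstep := h n (by omega)
    push_cast
    refine le_of_mul_le_mul_left ?_ (by linarith : (0 : ℝ) < N - n)
    nlinarith [mul_le_mul_of_nonneg_left (ih (by omega)) (by linarith : (0 : ℝ) ≤ N - n - 1)]

section Scheme

variable {ι α κ 𝒳 : Type*} {V : κ → Type*} {g : ∀ k, (ι → α) → V k} {f : (κ → ι) → (ι → α) → 𝒳}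
  {φ : ∀ k, (κ → ι) → 𝒳 → V k → α}

theorem jointKer_inf_ker_le_messages (hdec : ∀ w k d, φ k d (f d w) (g k w) = w (d k))
    (d : κ → ι) {U : Finset κ} {k : κ} (hk : k ∈ U) :
    jointKer g U ⊓ ker (f d) ≤ messages {d k} := by
  intro w w' h
  rw [messages_iff]
  intro i hi
  rw [mem_singleton] at hi
  subst hi
  calc w (d k) = φ k d (f d w) (g k w) := (hdec w k d).symm
    _ = φ k d (f d w') (g k w') := by rw [jointKer_iff.1 h.1 k hk, ker_def.1 h.2]
    _ = w' (d k) := hdec w' k d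

theorem entropy_jointKer_le_card_mul [Fintype ι] [DecidableEq ι] [Fintype α] [Nonempty α]
    [∀ k, Fintype (V k)] {x : ℝ} (hV : ∀ k, Fintype.card (V k) ≤ ⌊(2 : ℝ) ^ x⌋₊)
    (U : Finset κ) : (jointKer g U).entropy ≤ #U * x := by
  refine (entropy_jointKer_le g U).trans ?_
  simpa using sum_le_card_nsmul U _ x fun k _ => logb_le_of_le_floor_rpow
    (Fintype.card_pos_iff.2 ⟨g k (Classical.arbitrary _)⟩) (hV k)

end Scheme

section Converse

variable {ι α 𝒳 : Type*} [Fintype ι] [DecidableEq ι] [Nonempty ι] [Fintype α] [Nonempty α]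
  [Fintype 𝒳] {K : ℕ} {V : Fin K → Type*} {g : ∀ k, (ι → α) → V k}
  {f : (Fin K → ι) → (ι → α) → 𝒳} {φ : ∀ k, (Fin K → ι) → 𝒳 → V k → α}

/-- User `m` demands the `m`-th greedily chosen message and decodes it at step `m` from the
delivery symbol and the caches `U m`. -/
theorem exists_messages_mul_logb_card_sub_sum_le
    (hdec : ∀ w k d, φ k d (f d w) (g k w) = w (d k)) {U : ℕ → Finset (Fin K)}
    (hU : Monotone U) {ℓ : ℕ} (hℓ : ℓ ≤ Fintype.card ι)
    (hUℓ : ∀ k : Fin K, (k : ℕ) < ℓ → k ∈ U k) (hℓK : ℓ ≤ K) :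
    ∃ s : ℕ → ι, (∀ m < ℓ, s m ∉ (range m).image s ∧
      (Fintype.card ι - m : ℝ) * (messages {s m}).condMutualInfo (jointKer g (U m))
          (messages ((range m).image s))
        ≤ (jointKer g (U m)).condEntropy (messages ((range m).image s))) ∧
      ℓ * logb 2 (Fintype.card α) - ∑ m ∈ range ℓ,
          (messages {s m}).condMutualInfo (jointKer g (U m)) (messages ((range m).image s))
        ≤ logb 2 (Fintype.card 𝒳) := by
  obtain ⟨s, hs⟩ := exists_greedy_messages (fun m => jointKer g (U m)) hℓ
  refine ⟨s, hs, le_trans ?_ (entropy_ker_le_logb_card (f fun k => s k))⟩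
  refine mul_logb_card_sub_sum_le_entropy _ (fun _ _ h => jointKer_anti g (hU h))
    (fun m hm => (hs m hm).1) fun m hm => ?_
  exact jointKer_inf_ker_le_messages hdec (fun k => s k) (hUℓ ⟨m, by omega⟩ hm)

theorem mul_logb_card_sub_harmonic_le [∀ k, Fintype (V k)]
    (hdec : ∀ w k d, φ k d (f d w) (g k w) = w (d k)) {x : ℝ}
    (hV : ∀ k, Fintype.card (V k) ≤ ⌊(2 : ℝ) ^ x⌋₊) {ℓ : ℕ} (hℓ : ℓ ≤ Fintype.card ι)
    (hℓK : ℓ ≤ K) :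
    ℓ * logb 2 (Fintype.card α)
        - x * ∑ k ∈ Icc 1 ℓ, (k : ℝ) / ((Fintype.card ι : ℝ) - (k : ℝ) + 1)
      ≤ logb 2 (Fintype.card 𝒳) := by
  obtain ⟨s, hs, hX⟩ := exists_messages_mul_logb_card_sub_sum_le hdec
    (U := fun m => {k : Fin K | (k : ℕ) < m + 1})
    (fun _ _ h _ hk => by simp only [mem_filter, mem_univ, true_and] at hk ⊢; omega) hℓ
    (fun k _ => by simp) hℓK
  have hI : ∀ m ∈ range ℓ, (messages {s m}).condMutualInfo
      (jointKer g {k : Fin K | (k : ℕ) < m + 1}) (messages ((range m).image s))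
        ≤ x * ((m + 1) / (Fintype.card ι - m)) := by
    intro m hm
    rw [mem_range] at hm
    have hpos : (0 : ℝ) < Fintype.card ι - m := by
      have : (m : ℝ) < Fintype.card ι := by exact_mod_cast (show m < Fintype.card ι by omega)
      linarith
    rw [← mul_div_assoc, le_div_iff₀ hpos, mul_comm]
    calc (Fintype.card ι - m : ℝ) * (messages {s m}).condMutualInfo
          (jointKer g {k : Fin K | (k : ℕ) < m + 1}) (messages ((range m).image s))
        ≤ (jointKer g {k : Fin K | (k : ℕ) < m + 1}).condEntropy (messages ((range m).image s)) :=
          (hs m hm).2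
      _ ≤ (jointKer g {k : Fin K | (k : ℕ) < m + 1}).entropy := condEntropy_le_entropy
      _ ≤ #{k : Fin K | (k : ℕ) < m + 1} * x := entropy_jointKer_le_card_mul hV _
      _ = x * (m + 1) := by
          rw [Fin.card_filter_val_lt, min_eq_right (by omega)]
          push_cast
          ring
  have hsum : ∑ m ∈ range ℓ, x * ((m + 1) / (Fintype.card ι - m))
      = x * ∑ k ∈ Icc 1 ℓ, (k : ℝ) / ((Fintype.card ι : ℝ) - (k : ℝ) + 1) := by
    rw [← mul_sum, ← Ico_add_one_right_eq_Icc, sum_Ico_eq_sum_range, Nat.add_sub_cancel]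
    refine congrArg _ (sum_congr rfl fun m _ => ?_)
    push_cast
    ring_nf
  linarith [sum_le_sum hI]

theorem mul_logb_card_sub_sq_le [∀ k, Fintype (V k)]
    (hdec : ∀ w k d, φ k d (f d w) (g k w) = w (d k)) {x : ℝ}
    (hV : ∀ k, Fintype.card (V k) ≤ ⌊(2 : ℝ) ^ x⌋₊) {ℓ : ℕ} (hℓ : ℓ ≤ Fintype.card ι)
    (hℓK : ℓ ≤ K) :
    ℓ * logb 2 (Fintype.card α) - x * ℓ ^ 2 / Fintype.card ι ≤ logb 2 (Fintype.card 𝒳) := by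
  set Z := jointKer g {k : Fin K | (k : ℕ) < ℓ}
  obtain ⟨s, hs, hX⟩ := exists_messages_mul_logb_card_sub_sum_le hdec
    (U := fun _ => {k : Fin K | (k : ℕ) < ℓ}) monotone_const hℓ (fun k hk => by simpa) hℓK
  set a : ℕ → ℝ := fun m => Z.condEntropy (messages ((range m).image s))
  have hI (m : ℕ) :
      (messages {s m}).condMutualInfo Z (messages ((range m).image s)) = a m - a (m + 1) := by
    simp only [a, condMutualInfo_messages_eq, range_add_one, image_insert]
  have hdecay := mul_sub_le_of_mul_sub_succ_le a hℓ fun m hm => by rw [← hI]; exact (hs m hm).2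
  have ha₀ : a 0 ≤ ℓ * x := condEntropy_le_entropy.trans <|
    (entropy_jointKer_le_card_mul hV _).trans_eq (by rw [Fin.card_filter_val_lt, min_eq_right hℓK])
  rw [sum_congr rfl fun m _ => hI m, sum_range_sub'] at hX
  have hι : (0 : ℝ) < Fintype.card ι := by exact_mod_cast Fintype.card_pos
  have hloss : a 0 - a ℓ ≤ x * ℓ ^ 2 / Fintype.card ι := by
    rw [le_div_iff₀ hι]
    nlinarith [mul_le_mul_of_nonneg_left ha₀ (Nat.cast_nonneg ℓ : (0 : ℝ) ≤ ℓ)]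
  linarith

end Converse

theorem worst_case_converse_general
    (N K F : ℕ) (hN : 0 < N)
    (M : ℝ)
    (V : Fin K → Type) [∀ k, Fintype (V k)]
    (hV : ∀ k, Fintype.card (V k) ≤ ⌊(2 : ℝ) ^ ((F : ℝ) * M)⌋₊)
    (𝒳 : Type) [Fintype 𝒳]
    (g : ∀ k : Fin K, (Fin N → Fin (2 ^ F)) → V k)
    (f : (Fin K → Fin N) → (Fin N → Fin (2 ^ F)) → 𝒳)
    (φ : ∀ (k : Fin K), (Fin K → Fin N) → 𝒳 → V k → Fin (2 ^ F))
    (hdec : ∀ (w : Fin N → Fin (2 ^ F)) (k : Fin K) (d : Fin K → Fin N),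
      φ k d (f d w) (g k w) = w (d k))
    (ℓ : ℕ) (hℓ2 : ℓ ≤ min K N) :
    (F : ℝ) * ((ℓ : ℝ) - M * (ℓ : ℝ) ^ 2 / (N : ℝ)) ≤ Real.logb 2 (Fintype.card 𝒳)
    ∧ (F : ℝ) * ((ℓ : ℝ) - M * ∑ k ∈ Finset.Icc 1 ℓ, (k : ℝ) / ((N : ℝ) - (k : ℝ) + 1))
        ≤ Real.logb 2 (Fintype.card 𝒳) := by
  have : Nonempty (Fin N) := ⟨⟨0, hN⟩⟩
  have hℓN : ℓ ≤ Fintype.card (Fin N) := by simpa using hℓ2.trans (min_le_right K N)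
  have hℓK : ℓ ≤ K := hℓ2.trans (min_le_left K N)
  have hbits : logb 2 (Fintype.card (Fin (2 ^ F))) = F := by simp [logb_pow]
  have hsq := mul_logb_card_sub_sq_le hdec hV hℓN hℓK
  have hharm := mul_logb_card_sub_harmonic_le hdec hV hℓN hℓK
  rw [hbits, Fintype.card_fin] at hsq hharm
  exact ⟨(by ring : _ = _).trans_le hsq, (by ring : _ = _).trans_le hharm⟩

/-- **Finite-blocklength worst-case converse (Theorem 1).**
For any zero-error coded caching scheme with a common delivery alphabet `𝒳`,
for every `ℓ ∈ {1,…,min(K,N)}`: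
`log₂|𝒳| ≥ F·(ℓ − M·ℓ²/N)` and `log₂|𝒳| ≥ F·(ℓ − M·∑_{k=1}^{ℓ} k/(N−k+1))`. -/
theorem worst_case_converse
    (N K F : ℕ) (hN : 0 < N) (hK : 0 < K) (hF : 0 < F)
    (M : ℝ) (hM : 0 ≤ M)
    (V : Fin K → Type) [∀ k, Fintype (V k)]
    (hV : ∀ k, Fintype.card (V k) ≤ ⌊(2 : ℝ) ^ ((F : ℝ) * M)⌋₊)
    (𝒳 : Type) [Fintype 𝒳]
    (g : ∀ k : Fin K, (Fin N → Fin (2 ^ F)) → V k)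
    (f : (Fin K → Fin N) → (Fin N → Fin (2 ^ F)) → 𝒳)
    (φ : ∀ (k : Fin K), (Fin K → Fin N) → 𝒳 → V k → Fin (2 ^ F))
    (hdec : ∀ (w : Fin N → Fin (2 ^ F)) (k : Fin K) (d : Fin K → Fin N),
      φ k d (f d w) (g k w) = w (d k))
    (ℓ : ℕ) (hℓ1 : 1 ≤ ℓ) (hℓ2 : ℓ ≤ min K N) :
    (F : ℝ) * ((ℓ : ℝ) - M * (ℓ : ℝ) ^ 2 / (N : ℝ)) ≤ Real.logb 2 (Fintype.card 𝒳)
    ∧ (F : ℝ) * ((ℓ : ℝ) - M * ∑ k ∈ Finset.Icc 1 ℓ, (k : ℝ) / ((N : ℝ) - (k : ℝ) + 1))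
        ≤ Real.logb 2 (Fintype.card 𝒳) :=
  worst_case_converse_general N K F hN M V hV 𝒳 g f φ hdec ℓ hℓ2
end

section
/- Worst-case corner-point bound: Let K and N be positive integers with N̄ := min(K,N) ≥ 2, let ℓ ∈ {1,…,N̄−1}, and set M_ℓ := (N−ℓ)/(ℓ+1). Then ((N − M_ℓ)/M_ℓ)·(1 − (1 − M_ℓ/N)^{N̄}) ≤ φ(ℓ/N, ℓ) · ∑_{j=1}^{ℓ} (1 − j·M_ℓ/(N−j+1)). -/
/-! At `M = M_ℓ` and `a = ℓ/N` one has `ℓ/a = N` and `(ℓ+a)/(ℓ+1) = 1 - M/N`, and each term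
`1 - jM/(N-j+1)` splits so that the sum on the right is `ℓ(N+1)/(ℓ+1)` times the denominator of `φ`.
That denominator is positive (each `(1-a)/(ℓ-aj)` is below `1/ℓ`), so it cancels: the right-hand
side is exactly `((N-M)/M)(1-(1-M/N)^N)`, the achievable rate with `N̄` replaced by `N`. Since
`0 ≤ 1 - M/N ≤ 1` and `N̄ ≤ N`, this dominates the rate at `N̄`. -/

/-- The function `φ(a,ℓ)` from Theorem 2 of the paper. -/
noncomputable def phi (a : ℝ) (ℓ : ℕ) : ℝ :=
  ((a * ((ℓ : ℝ) + 1) / ((1 - a) * (ℓ : ℝ))) *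
      (1 - (((ℓ : ℝ) + a) / ((ℓ : ℝ) + 1)) ^ ((ℓ : ℝ) / a))) /
    (1 - (1 - a) * ∑ j ∈ Finset.range ℓ, 1 / ((ℓ : ℝ) - a * (j : ℝ)))

open Finset

noncomputable def cornerMemory (N ℓ : ℝ) : ℝ := (N - ℓ) / (ℓ + 1)

section

variable {N ℓ : ℝ}

lemma cornerMemory_pos (hℓ : 0 ≤ ℓ) (hℓN : ℓ < N) : 0 < cornerMemory N ℓ :=
  div_pos (sub_pos.2 hℓN) (by linarith)

lemma cornerMemory_le_self (hℓ : 0 ≤ ℓ) (hℓN : ℓ ≤ N) : cornerMemory N ℓ ≤ N := by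
  have : cornerMemory N ℓ ≤ N - ℓ := div_le_self (sub_nonneg.2 hℓN) (by linarith)
  linarith

lemma sub_cornerMemory_div_cornerMemory (hℓ : 0 ≤ ℓ) (hℓN : ℓ < N) :
    (N - cornerMemory N ℓ) / cornerMemory N ℓ = ℓ * (N + 1) / (N - ℓ) := by
  have : N - ℓ ≠ 0 := (sub_pos.2 hℓN).ne'
  have : ℓ + 1 ≠ 0 := by positivity
  unfold cornerMemory
  field_simp
  ring

lemma one_sub_cornerMemory_div (hN : N ≠ 0) (hℓ : ℓ + 1 ≠ 0) :
    1 - cornerMemory N ℓ / N = (ℓ + ℓ / N) / (ℓ + 1) := by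
  unfold cornerMemory
  field_simp
  ring

lemma one_sub_mul_cornerMemory_div (j : ℝ) (hℓ : ℓ ≠ 0) (hℓ1 : ℓ + 1 ≠ 0) (hN : N ≠ 0)
    (hj : N - j ≠ 0) :
    1 - (1 + j) * cornerMemory N ℓ / (N - (1 + j) + 1) =
      ℓ * (N + 1) / (ℓ + 1) * (1 / ℓ - (1 - ℓ / N) * (1 / (ℓ - ℓ / N * j))) := by
  rw [show ℓ - ℓ / N * j = ℓ * (N - j) / N by field_simp, show N - (1 + j) + 1 = N - j by ring]
  unfold cornerMemory
  field_simp
  ring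

end

lemma sum_one_sub_mul_cornerMemory_div {ℓ : ℕ} {N : ℝ} (hℓ : 0 < ℓ) (hℓN : (ℓ : ℝ) < N) :
    ∑ j ∈ Icc 1 ℓ, (1 - (j : ℝ) * cornerMemory N ℓ / (N - j + 1)) =
      ℓ * (N + 1) / (ℓ + 1) *
        (1 - (1 - ℓ / N) * ∑ j ∈ range ℓ, 1 / ((ℓ : ℝ) - ℓ / N * j)) := by
  have hℓ0 : (ℓ : ℝ) ≠ 0 := by positivity
  have hN : N ≠ 0 := by linarith
  have hterm : ∀ j ∈ range ℓ,
      1 - ((1 + j : ℕ) : ℝ) * cornerMemory N ℓ / (N - ((1 + j : ℕ) : ℝ) + 1) =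
        ℓ * (N + 1) / (ℓ + 1) * (1 / ℓ - (1 - ℓ / N) * (1 / ((ℓ : ℝ) - ℓ / N * j))) := by
    intro j hj
    have hjℓ : (j : ℝ) < ℓ := by exact_mod_cast mem_range.1 hj
    push_cast
    exact one_sub_mul_cornerMemory_div _ hℓ0 (by positivity) (by linarith) (by linarith)
  rw [← Ico_add_one_right_eq_Icc, sum_Ico_eq_sum_range, Nat.add_sub_cancel,
    sum_congr rfl hterm, ← mul_sum, sum_sub_distrib, ← mul_sum, sum_const, card_range,
    nsmul_eq_mul, mul_one_div_cancel hℓ0]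

lemma one_sub_mul_sum_one_div_pos {ℓ : ℕ} {a : ℝ} (hℓ : 0 < ℓ) (ha0 : 0 < a) (ha1 : a ≤ 1) :
    0 < 1 - (1 - a) * ∑ j ∈ range ℓ, 1 / ((ℓ : ℝ) - a * j) := by
  have hℓ0 : (0 : ℝ) < ℓ := by exact_mod_cast hℓ
  have hterm : ∀ j ∈ range ℓ, (1 - a) * (1 / ((ℓ : ℝ) - a * j)) < 1 / ℓ := by
    intro j hj
    have hjℓ : (j : ℝ) < ℓ := by exact_mod_cast mem_range.1 hj
    have hpos : 0 < (ℓ : ℝ) - a * j := by nlinarith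
    rw [mul_one_div, div_lt_div_iff₀ hpos hℓ0]
    nlinarith
  have hsum : (1 - a) * ∑ j ∈ range ℓ, 1 / ((ℓ : ℝ) - a * j) < ∑ _j ∈ range ℓ, 1 / (ℓ : ℝ) := by
    rw [mul_sum]
    exact sum_lt_sum_of_nonempty (nonempty_range_iff.2 hℓ.ne') hterm
  rw [sum_const, card_range, nsmul_eq_mul, mul_one_div_cancel hℓ0.ne'] at hsum
  linarith

lemma phi_mul_sum_eq {N ℓ : ℕ} (hℓ : 0 < ℓ) (hℓN : ℓ < N) :
    phi (ℓ / N) ℓ * ∑ j ∈ Icc 1 ℓ, (1 - (j : ℝ) * cornerMemory N ℓ / (N - j + 1)) =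
      (N - cornerMemory N ℓ) / cornerMemory N ℓ * (1 - (1 - cornerMemory N ℓ / N) ^ N) := by
  have hℓ0 : (0 : ℝ) < ℓ := by exact_mod_cast hℓ
  have hℓN' : (ℓ : ℝ) < N := by exact_mod_cast hℓN
  have hN : (N : ℝ) ≠ 0 := by linarith
  have hD := one_sub_mul_sum_one_div_pos hℓ (div_pos hℓ0 (by linarith))
    ((div_le_one₀ (by linarith)).2 hℓN'.le)
  have hexp : (ℓ : ℝ) / (ℓ / N) = N := by field_simp
  rw [sum_one_sub_mul_cornerMemory_div hℓ hℓN', phi, hexp, Real.rpow_natCast,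
    ← one_sub_cornerMemory_div hN (by positivity), sub_cornerMemory_div_cornerMemory hℓ0.le hℓN']
  generalize 1 - (1 - (ℓ : ℝ) / N) * ∑ j ∈ range ℓ, 1 / ((ℓ : ℝ) - ℓ / N * j) = D at hD ⊢
  have : (N : ℝ) - ℓ ≠ 0 := by linarith
  field_simp

theorem worst_case_corner_point_general (K N : ℕ)
    (ℓ : ℕ) (hℓ1 : 1 ≤ ℓ) (hℓ2 : ℓ ≤ min K N - 1)
    (M : ℝ) (hMdef : M = ((N : ℝ) - (ℓ : ℝ)) / ((ℓ : ℝ) + 1)) :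
    ((N : ℝ) - M) / M * (1 - (1 - M / (N : ℝ)) ^ min K N) ≤
      phi ((ℓ : ℝ) / (N : ℝ)) ℓ *
        ∑ j ∈ Finset.Icc 1 ℓ, (1 - (j : ℝ) * M / ((N : ℝ) - (j : ℝ) + 1)) := by
  have hℓN : ℓ < N := by omega
  have hℓN' : (ℓ : ℝ) < N := by exact_mod_cast hℓN
  obtain rfl : M = cornerMemory N ℓ := hMdef
  rw [phi_mul_sum_eq hℓ1 hℓN]
  have hM0 := cornerMemory_pos (Nat.cast_nonneg ℓ) hℓN'
  have hMN := cornerMemory_le_self (Nat.cast_nonneg ℓ) hℓN'.le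
  have hq0 : 0 ≤ 1 - cornerMemory N ℓ / N := sub_nonneg.2 ((div_le_one₀ (by linarith)).2 hMN)
  have hq1 : 1 - cornerMemory N ℓ / N ≤ 1 := sub_le_self _ (by positivity)
  exact mul_le_mul_of_nonneg_left
    (sub_le_sub_left (pow_le_pow_of_le_one hq0 hq1 (min_le_right K N)) 1)
    (div_nonneg (by linarith) hM0.le)

/-- **Worst-case corner-point bound.** For `N̄ := min(K,N) ≥ 2`,
`ℓ ∈ {1,…,N̄−1}` and the corner memory point `M_ℓ = (N−ℓ)/(ℓ+1)`:
`R_YMA(K,N,M_ℓ) = ((N−M_ℓ)/M_ℓ)(1−(1−M_ℓ/N)^{N̄}) ≤ φ(ℓ/N,ℓ)·∑_{j=1}^{ℓ}(1−jM_ℓ/(N−j+1))`. -/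
theorem worst_case_corner_point (K N : ℕ) (hKN : 2 ≤ min K N)
    (ℓ : ℕ) (hℓ1 : 1 ≤ ℓ) (hℓ2 : ℓ ≤ min K N - 1)
    (M : ℝ) (hMdef : M = ((N : ℝ) - (ℓ : ℝ)) / ((ℓ : ℝ) + 1)) :
    ((N : ℝ) - M) / M * (1 - (1 - M / (N : ℝ)) ^ min K N) ≤
      phi ((ℓ : ℝ) / (N : ℝ)) ℓ *
        ∑ j ∈ Finset.Icc 1 ℓ, (1 - (j : ℝ) * M / ((N : ℝ) - (j : ℝ) + 1)) :=
  worst_case_corner_point_general K N ℓ hℓ1 hℓ2 M hMdef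
end

section
/- Harmonic-type sum bound (inequality (30) of the paper): For every positive integer ℓ and every a ∈ (0,1): ∑_{j=0}^{ℓ−1} 1/(ℓ − a·j) ≤ 1/(ℓ(1−a) + a) + (1/a)·ln( ℓ/(ℓ(1−a) + a) ). -/
/-!
Comparing each term with an integral: `1/x ≤ (log x - log (x - a))/a`, since `1/t ≥ 1/x` on
`[x - a, x]`. Summed over the arithmetic progression `ℓ - a j`, `j < ℓ - 1`, the right-hand sides
telescope to `(1/a) log (ℓ / (ℓ - a (ℓ - 1)))`; the last term `j = ℓ - 1` is kept as it is.
-/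

open Finset Real

lemma div_le_log_sub_log {a x : ℝ} (hx : 0 < x) (hax : a < x) :
    a / x ≤ log x - log (x - a) := by
  have hxa : 0 < x - a := sub_pos.mpr hax
  have h := one_sub_inv_le_log_of_pos (div_pos hx hxa)
  have hlhs : 1 - (x / (x - a))⁻¹ = a / x := by field_simp; ring
  rwa [hlhs, log_div hx.ne' hxa.ne'] at h

lemma sum_one_div_sub_mul_le_log {a c : ℝ} (ha : 0 < a) :
    ∀ n : ℕ, a * n < c →
      ∑ j ∈ range n, 1 / (c - a * j) ≤ (log c - log (c - a * n)) / a
  | 0, _ => by simp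
  | n + 1, hn => by
    rw [Nat.cast_succ, mul_add_one] at hn
    have hx : 0 < c - a * n := by linarith
    have hstep := div_le_log_sub_log hx (show a < c - a * n by linarith)
    have ih := sum_one_div_sub_mul_le_log (c := c) ha n (by linarith)
    rw [sum_range_succ]
    calc ∑ j ∈ range n, 1 / (c - a * j) + 1 / (c - a * n)
        ≤ (log c - log (c - a * n)) / a + (log (c - a * n) - log (c - a * n - a)) / a := by
          refine add_le_add ih ?_
          rwa [le_div_iff₀ ha, one_div_mul_eq_div]
      _ = (log c - log (c - a * ↑(n + 1))) / a := by push_cast; ring_nf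

/-- **Harmonic-type sum bound (inequality (30) of the paper).** For every positive
integer `ℓ` and every `a ∈ (0,1)`:
`∑_{j=0}^{ℓ−1} 1/(ℓ − a·j) ≤ 1/(ℓ(1−a) + a) + (1/a)·ln(ℓ/(ℓ(1−a) + a))`. -/
theorem harmonic_type_sum_bound (ℓ : ℕ) (hℓ : 0 < ℓ) (a : ℝ) (ha : a ∈ Set.Ioo (0 : ℝ) 1) :
    ∑ j ∈ Finset.range ℓ, 1 / ((ℓ : ℝ) - a * (j : ℝ)) ≤
      1 / ((ℓ : ℝ) * (1 - a) + a)
        + (1 / a) * Real.log ((ℓ : ℝ) / ((ℓ : ℝ) * (1 - a) + a)) := by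
  obtain ⟨ha0, ha1⟩ := ha
  obtain ⟨n, rfl⟩ : ∃ n, ℓ = n + 1 := Nat.exists_eq_add_one.mpr hℓ
  have hlast : ((n + 1 : ℕ) : ℝ) - a * n = ((n + 1 : ℕ) : ℝ) * (1 - a) + a := by push_cast; ring
  have hlast_pos : 0 < ((n + 1 : ℕ) : ℝ) * (1 - a) + a := by positivity
  have hbody := sum_one_div_sub_mul_le_log ha0 n (c := ((n + 1 : ℕ) : ℝ)) (by push_cast; nlinarith)
  rw [hlast, ← log_div (by positivity) hlast_pos.ne'] at hbody
  rw [sum_range_succ, hlast, one_div_mul_eq_div]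
  linarith
end

section
/- Remark 1 inequality (φ is dominated by ψ): For every positive integer ℓ and every a ∈ (0,1), setting b := 1/ℓ, it holds that φ(a,ℓ) ≤ ψ(a,b). Consequently, sup over integers ℓ > 10⁴ and a ∈ (0,1) of φ(a,ℓ) is at most sup over b ∈ (0,10⁻⁴) and a ∈ (0,1) of ψ(a,b). -/
/-- The function `ψ(a,b)` from Remark 1 of the paper. -/
noncomputable def psi (a b : ℝ) : ℝ :=
  ((a * (1 + b) / (1 - a)) * (1 - ((1 + a * b) / (1 + b)) ^ (1 / (a * b)))) /
    (1 - (1 - a) * b / (1 - a + a * b) + ((1 - a) / a) * Real.log (1 - a + a * b))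

/-!
With `b = 1/ℓ` the numerators of `φ(a,ℓ)` and `ψ(a,b)` coincide and are nonnegative, so it
suffices to compare denominators. Since `t ↦ 1/(ℓ - a t)` is increasing, each term
`1/(ℓ - a j)` with `j < ℓ - 1` is at most its integral over `[j, j+1]`; summing, the sum in
`φ` is at most its last term plus `(1/a) log (ℓ / (ℓ - a(ℓ-1)))`, and this bound is exactly what
the denominator of `ψ(a, 1/ℓ)` subtracts. Positivity of that denominator follows from
`log c ≥ 1 - 1/c`.
-/

open Finset Real

lemma div_le_log_sub_log_s14 {u v : ℝ} (hv : 0 < v) (hvu : v ≤ u) :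
    (u - v) / u ≤ log u - log v := by
  have hu : 0 < u := hv.trans_le hvu
  have h := one_sub_inv_le_log_of_pos (div_pos hu hv)
  rw [log_div hu.ne' hv.ne', inv_div] at h
  calc (u - v) / u = 1 - v / u := by field_simp
    _ ≤ log u - log v := h

lemma sum_range_one_div_sub_mul_le {a x : ℝ} (ha : 0 < a) {n : ℕ} (hn : 0 < x - a * n) :
    ∑ j ∈ range n, 1 / (x - a * j) ≤ (log x - log (x - a * n)) / a := by
  have hterm : ∀ j ∈ range n,
      1 / (x - a * j) ≤ (log (x - a * j) - log (x - a * (j + 1 : ℕ))) / a := by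
    intro j hj
    have hjn : ((j + 1 : ℕ) : ℝ) ≤ n := by exact_mod_cast mem_range.mp hj
    have hpos : 0 < x - a * (j + 1 : ℕ) := by nlinarith
    have h := div_le_log_sub_log_s14 (u := x - a * j) hpos (by push_cast; nlinarith)
    rw [le_div_iff₀ ha]
    calc 1 / (x - a * j) * a = (x - a * j - (x - a * (j + 1 : ℕ))) / (x - a * j) := by
          push_cast; ring
      _ ≤ _ := h
  calc ∑ j ∈ range n, 1 / (x - a * j)
      ≤ ∑ j ∈ range n, (log (x - a * j) - log (x - a * (j + 1 : ℕ))) / a := sum_le_sum hterm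
    _ = (log x - log (x - a * n)) / a := by
      rw [← sum_div, sum_range_sub' (fun j : ℕ => log (x - a * j))]
      simp

lemma psi_den_pos {a b : ℝ} (ha₀ : 0 < a) (ha₁ : a < 1) (hb : 0 < b) :
    0 < 1 - (1 - a) * b / (1 - a + a * b) + ((1 - a) / a) * log (1 - a + a * b) := by
  set c := 1 - a + a * b
  have hc₀ : 0 < c := by positivity
  have hlog : (1 - a) / a * (1 - c⁻¹) ≤ (1 - a) / a * log c :=
    mul_le_mul_of_nonneg_left (one_sub_inv_le_log_of_pos hc₀) (div_nonneg (by linarith) ha₀.le)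
  have hlower : 1 - (1 - a) * b / c + (1 - a) / a * (1 - c⁻¹) = 1 - (1 - a) / c := by
    field_simp
    ring
  have hlt : (1 - a) / c < 1 := by
    rw [div_lt_one hc₀]
    nlinarith
  linarith

lemma psi_den_one_div {a x : ℝ} (ha : a ≠ 0) (hx : 0 < x) (hy : 0 < x - a * (x - 1)) :
    1 - (1 - a) * (1 / x) / (1 - a + a * (1 / x)) + ((1 - a) / a) * log (1 - a + a * (1 / x))
      = 1 - (1 - a) * (1 / (x - a * (x - 1)) + (log x - log (x - a * (x - 1))) / a) := by
  have hc : 1 - a + a * (1 / x) = (x - a * (x - 1)) / x := by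
    field_simp
    ring
  rw [hc, log_div hy.ne' hx.ne']
  field_simp
  ring

lemma psi_num_one_div {a x : ℝ} (ha : a ≠ 0) (hx : 0 < x) :
    a * (1 + 1 / x) / (1 - a) * (1 - ((1 + a * (1 / x)) / (1 + 1 / x)) ^ (1 / (a * (1 / x))))
      = a * (x + 1) / ((1 - a) * x) * (1 - ((x + a) / (x + 1)) ^ (x / a)) := by
  have hbase : (1 + a * (1 / x)) / (1 + 1 / x) = (x + a) / (x + 1) := by
    field_simp
  have hexp : 1 / (a * (1 / x)) = x / a := by
    field_simp
  have hcoef : a * (1 + 1 / x) / (1 - a) = a * (x + 1) / ((1 - a) * x) := by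
    field_simp
  rw [hbase, hexp, hcoef]

lemma phi_num_nonneg {a x : ℝ} (ha₀ : 0 < a) (ha₁ : a < 1) (hx : 0 < x) :
    0 ≤ a * (x + 1) / ((1 - a) * x) * (1 - ((x + a) / (x + 1)) ^ (x / a)) := by
  have hr : (x + a) / (x + 1) < 1 := by
    rw [div_lt_one (by positivity)]
    linarith
  have hpow : ((x + a) / (x + 1)) ^ (x / a) < 1 := rpow_lt_one (by positivity) hr (by positivity)
  have hcoef : 0 ≤ a * (x + 1) / ((1 - a) * x) := div_nonneg (by positivity) (by nlinarith)
  exact mul_nonneg hcoef (by linarith)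

lemma phi_le_psi_one_div {a : ℝ} (ha₀ : 0 < a) (ha₁ : a < 1) {ℓ : ℕ} (hℓ : 0 < ℓ) :
    phi a ℓ ≤ psi a (1 / ℓ) := by
  obtain ⟨n, rfl⟩ := Nat.exists_eq_add_one_of_ne_zero hℓ.ne'
  set x : ℝ := ((n + 1 : ℕ) : ℝ) with hxdef
  have hxn : x - 1 = n := by rw [hxdef]; push_cast; ring
  have hx : 0 < x := by positivity
  have hy : 0 < x - a * n := by rw [hxdef]; push_cast; nlinarith
  have hsum : ∑ j ∈ range (n + 1), 1 / (x - a * j)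
      ≤ 1 / (x - a * n) + (log x - log (x - a * n)) / a := by
    rw [sum_range_succ]
    linarith [sum_range_one_div_sub_mul_le ha₀ hy]
  have hden := psi_den_one_div ha₀.ne' hx (by rwa [hxn])
  have hden_pos := psi_den_pos ha₀ ha₁ (one_div_pos.mpr hx)
  rw [hxn] at hden
  unfold phi psi
  rw [psi_num_one_div ha₀.ne' hx]
  refine div_le_div_of_nonneg_left (phi_num_nonneg ha₀ ha₁ hx) hden_pos ?_
  rw [hden]
  exact sub_le_sub_left (mul_le_mul_of_nonneg_left hsum (by linarith)) 1

/-- **Remark 1 inequality (`φ` is dominated by `ψ`).** For every positive integer `ℓ`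
and every `a ∈ (0,1)`, with `b := 1/ℓ` we have `φ(a,ℓ) ≤ ψ(a,b)`. Consequently, any
`C` dominating `ψ(a,b)` on `(0,1) × (0,10⁻⁴)` dominates `φ(a,ℓ)` for all `ℓ > 10⁴`
and `a ∈ (0,1)`. -/
theorem phi_le_psi :
    (∀ ℓ : ℕ, 0 < ℓ → ∀ a ∈ Set.Ioo (0 : ℝ) 1, phi a ℓ ≤ psi a (1 / (ℓ : ℝ)))
    ∧ (∀ C : ℝ,
        (∀ a ∈ Set.Ioo (0 : ℝ) 1, ∀ b ∈ Set.Ioo (0 : ℝ) (10 ^ (-4 : ℤ) : ℝ), psi a b ≤ C) →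
        ∀ ℓ : ℕ, 10 ^ 4 < ℓ → ∀ a ∈ Set.Ioo (0 : ℝ) 1, phi a ℓ ≤ C) := by
  refine ⟨fun ℓ hℓ a ha => phi_le_psi_one_div ha.1 ha.2 hℓ, ?_⟩
  intro C hC ℓ hℓ a ha
  have hL : (10 ^ 4 : ℝ) < ℓ := by exact_mod_cast hℓ
  have hb : 1 / (ℓ : ℝ) ∈ Set.Ioo (0 : ℝ) (10 ^ (-4 : ℤ) : ℝ) := by
    refine ⟨by positivity, ?_⟩
    rw [show (10 : ℝ) ^ (-4 : ℤ) = 1 / 10 ^ 4 by norm_num]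
    exact one_div_lt_one_div_of_lt (by norm_num) hL
  exact (phi_le_psi_one_div ha.1 ha.2 (by omega)).trans (hC a ha _ hb)
end

section
/- Gap at zero memory in the average case: For all positive integers m and N with m ≤ N, it holds that m / ( N·(1 − (1 − 1/N)^m) ) ≤ 1/(1 − e^{−1}). Equivalently, m·(1 − e^{−1}) ≤ N·(1 − (1 − 1/N)^m). -/
lemma exp_neg_le_segment {x : ℝ} (hx0 : 0 ≤ x) (hx1 : x ≤ 1) :
    Real.exp (-x) ≤ (1 - x) + x * Real.exp (-1) := by
  have h := convexOn_exp.2 (Set.mem_univ (0:ℝ)) (Set.mem_univ (-1:ℝ))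
    (by linarith : (0:ℝ) ≤ 1 - x) hx0 (by ring)
  simpa [Real.exp_zero, mul_comm] using h

/-- **Gap at zero memory in the average case.** For all positive integers `m ≤ N`:
`m / (N·(1 − (1 − 1/N)^m)) ≤ 1/(1 − e⁻¹)`, equivalently
`m·(1 − e⁻¹) ≤ N·(1 − (1 − 1/N)^m)`. -/
theorem gap_at_zero_memory (m N : ℕ) (hm : 0 < m) (hmN : m ≤ N) :
    (m : ℝ) / ((N : ℝ) * (1 - (1 - 1 / (N : ℝ)) ^ m)) ≤ 1 / (1 - Real.exp (-1))
    ∧ (m : ℝ) * (1 - Real.exp (-1)) ≤ (N : ℝ) * (1 - (1 - 1 / (N : ℝ)) ^ m) := by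
  have hN : 0 < N := lt_of_lt_of_le hm hmN
  have hNR : (0:ℝ) < N := by exact_mod_cast hN
  have hmR : (0:ℝ) < m := by exact_mod_cast hm
  have hmNR : (m:ℝ) ≤ N := by exact_mod_cast hmN
  set q : ℝ := 1 - 1 / (N:ℝ) with hq
  have hq0 : 0 ≤ q := by
    have : 1 / (N:ℝ) ≤ 1 := by
      rw [div_le_one hNR]; exact_mod_cast hN
    rw [hq]; linarith
  -- Step 1: q^m ≤ exp(-m/N)
  have h1 : q ≤ Real.exp (-(1/(N:ℝ))) := by
    have := Real.add_one_le_exp (-(1/(N:ℝ)))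
    linarith
  have h2 : q ^ m ≤ Real.exp (-((m:ℝ)/(N:ℝ))) := by
    calc q ^ m ≤ (Real.exp (-(1/(N:ℝ)))) ^ m := pow_le_pow_left₀ hq0 h1 m
    _ = Real.exp (-((m:ℝ)/(N:ℝ))) := by
        rw [← Real.exp_nat_mul]; congr 1; field_simp
  -- Step 2: exp(-x) ≤ 1 - x(1 - e⁻¹) for x = m/N ∈ [0,1]
  have hx0 : (0:ℝ) ≤ (m:ℝ)/(N:ℝ) := by positivity
  have hx1 : (m:ℝ)/(N:ℝ) ≤ 1 := by rw [div_le_one hNR]; exact hmNR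
  have h3 := exp_neg_le_segment hx0 hx1
  -- main inequality
  have key : (m : ℝ) * (1 - Real.exp (-1)) ≤ (N : ℝ) * (1 - q ^ m) := by
    have h4 : q ^ m ≤ 1 - ((m:ℝ)/(N:ℝ)) * (1 - Real.exp (-1)) := by
      have := h2.trans h3; linarith
    have : (N:ℝ) * (((m:ℝ)/(N:ℝ)) * (1 - Real.exp (-1))) ≤ (N:ℝ) * (1 - q ^ m) := by
      apply mul_le_mul_of_nonneg_left _ hNR.le
      linarith
    calc (m : ℝ) * (1 - Real.exp (-1))
        = (N:ℝ) * (((m:ℝ)/(N:ℝ)) * (1 - Real.exp (-1))) := by field_simp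
      _ ≤ _ := this
  refine ⟨?_, key⟩
  have he : (0:ℝ) < 1 - Real.exp (-1) := by
    have : Real.exp (-1) < 1 := Real.exp_lt_one_iff.mpr (by norm_num)
    linarith
  have hD : 0 < (N : ℝ) * (1 - q ^ m) := lt_of_lt_of_le (by positivity) key
  rw [div_le_div_iff₀ hD he]
  linarith [key]
end
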